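/- For t > 0 and a > 0 with ta = (2r−1)π for some natural number r ≥ 1, the tail integral (∫_{-∞}^{-a} + ∫_{a}^{∞}) sin(tu)/(2πu) du satisfies −2/(π t a) < (∫_{-∞}^{-a} + ∫_{a}^{∞}) sin(tu)/(2πu) du < 0. -/

import Mathlib

/-!
Substituting `v = t u` and using that the integrand is even, the tail is
`π⁻¹ ∫_{ta}^∞ sin v / v dv`. Integrating by parts, `∫_c^∞ sin v / v dv = cos c / c - J`
with `J = ∫_c^∞ cos v / v² dv`, and `|J| < ∫_c^∞ dv / v² = 1 / c` strictly because
`|cos v| < 1` off the countable set `πℤ`. For `c = ta = (2r - 1)π` we have `cos c = -1`,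
so the tail is `π⁻¹ (-1 / c - J) ∈ (-2 / (π c), 0)`.
-/

open Filter intervalIntegral

open MeasureTheory Set Real Topology

lemma integrableOn_Ioi_one_div_sq {c : ℝ} (hc : 0 < c) :
    IntegrableOn (fun v : ℝ => 1 / v ^ 2) (Ioi c) :=
  (integrableOn_Ioi_rpow_of_lt (by norm_num : (-2 : ℝ) < -1) hc).congr_fun
    (fun v hv => by simp [rpow_neg (hc.trans hv).le]) measurableSet_Ioi

lemma integral_Ioi_one_div_sq {c : ℝ} (hc : 0 < c) : ∫ v in Ioi c, 1 / v ^ 2 = c⁻¹ := by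
  rw [← setIntegral_congr_fun measurableSet_Ioi (f := fun v : ℝ => v ^ (-2 : ℝ))
    (fun v hv => by simp [rpow_neg (hc.trans hv).le]), integral_Ioi_rpow_of_lt (by norm_num) hc]
  norm_num [rpow_neg_one]

lemma integrableOn_Ioi_div_sq_of_abs_le_one {f : ℝ → ℝ} (hf : Continuous f)
    (hf1 : ∀ v, |f v| ≤ 1) {c : ℝ} (hc : 0 < c) :
    IntegrableOn (fun v => f v / v ^ 2) (Ioi c) := by
  have := (integrableOn_Ioi_one_div_sq hc).bdd_mul hf.aestronglyMeasurable
    (Eventually.of_forall fun v => (norm_eq_abs (f v)).trans_le (hf1 v))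
  simp only [mul_one_div] at this
  exact this

lemma volume_setOf_abs_cos_eq_one : volume {v : ℝ | |cos v| = 1} = 0 :=
  ((countable_range fun k : ℤ => (k : ℝ) * π).mono
    fun _ hv => abs_cos_eq_one_iff.1 hv).measure_zero _

lemma integral_Ioi_abs_cos_div_sq_lt {c : ℝ} (hc : 0 < c) :
    ∫ v in Ioi c, |cos v| / v ^ 2 < c⁻¹ := by
  have hint : IntegrableOn (fun v : ℝ => |cos v| / v ^ 2) (Ioi c) :=
    integrableOn_Ioi_div_sq_of_abs_le_one continuous_cos.abs
      (fun v => (abs_abs _).trans_le (abs_cos_le_one v)) hc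
  have hgap : 0 < ∫ v in Ioi c, (1 / v ^ 2 - |cos v| / v ^ 2) := by
    refine (setIntegral_pos_iff_support_of_nonneg_ae
      (f := fun v => 1 / v ^ 2 - |cos v| / v ^ 2) ?_
      ((integrableOn_Ioi_one_div_sq hc).sub hint)).2 ?_
    · refine Eventually.of_forall fun v => ?_
      show 0 ≤ 1 / v ^ 2 - |cos v| / v ^ 2
      rw [← sub_div]
      exact div_nonneg (by linarith [abs_cos_le_one v]) (sq_nonneg v)
    · calc (0 : ENNReal) < volume (Ioi c \ {v | |cos v| = 1}) := by
            simp [measure_sdiff_null volume_setOf_abs_cos_eq_one]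
        _ ≤ _ := measure_mono ?_
      rintro v ⟨hvc, hv1 : |cos v| ≠ 1⟩
      refine ⟨?_, hvc⟩
      have hv : 0 < v ^ 2 := pow_pos (hc.trans hvc) 2
      have := (abs_cos_le_one v).lt_of_ne hv1
      rw [Function.mem_support, ← sub_div]
      exact (div_pos (by linarith) hv).ne'
  rw [integral_sub (integrableOn_Ioi_one_div_sq hc) hint, integral_Ioi_one_div_sq hc] at hgap
  linarith

lemma abs_integral_Ioi_cos_div_sq_lt {c : ℝ} (hc : 0 < c) :
    |∫ v in Ioi c, cos v / v ^ 2| < c⁻¹ :=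
  calc _ ≤ ∫ v in Ioi c, |cos v / v ^ 2| := abs_integral_le_integral_abs
    _ = ∫ v in Ioi c, |cos v| / v ^ 2 := by simp only [abs_div, abs_sq]
    _ < c⁻¹ := integral_Ioi_abs_cos_div_sq_lt hc

lemma hasDerivAt_neg_cos_div {v : ℝ} (hv : v ≠ 0) :
    HasDerivAt (fun v => -cos v / v) (sin v / v + cos v / v ^ 2) v := by
  refine ((hasDerivAt_cos v).neg.div (hasDerivAt_id' v) hv).congr_deriv ?_
  simp only [Pi.neg_apply]
  field_simp
  ring

lemma integral_sin_div_eq_sub_integral_cos_div_sq {c B : ℝ} (hc : 0 < c) (hcB : c ≤ B) :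
    ∫ v in c..B, sin v / v = cos c / c - cos B / B - ∫ v in c..B, cos v / v ^ 2 := by
  have hpos : ∀ v ∈ uIcc c B, v ≠ 0 := fun v hv =>
    (hc.trans_le (uIcc_of_le hcB ▸ hv).1).ne'
  have hsin : IntervalIntegrable (fun v => sin v / v) volume c B :=
    (continuous_sin.continuousOn.div continuousOn_id hpos).intervalIntegrable
  have hcos : IntervalIntegrable (fun v => cos v / v ^ 2) volume c B :=
    (continuous_cos.continuousOn.div (continuousOn_id.pow 2)
      fun v hv => pow_ne_zero 2 (hpos v hv)).intervalIntegrable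
  have := integral_eq_sub_of_hasDerivAt (fun v hv => hasDerivAt_neg_cos_div (hpos v hv))
    (hsin.add hcos)
  rw [integral_add hsin hcos] at this
  linear_combination this

lemma tendsto_cos_div_atTop : Tendsto (fun B : ℝ => cos B / B) atTop (𝓝 0) := by
  simp_rw [div_eq_mul_inv]
  refine isBoundedUnder_le_mul_tendsto_zero
    ⟨1, eventually_map.2 (Eventually.of_forall fun B => ?_)⟩ tendsto_inv_atTop_zero
  simpa using abs_cos_le_one B

lemma tendsto_integral_sin_div {c : ℝ} (hc : 0 < c) :
    Tendsto (fun B => ∫ v in c..B, sin v / v) atTop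
      (𝓝 (cos c / c - ∫ v in Ioi c, cos v / v ^ 2)) := by
  have := (tendsto_const_nhds (x := cos c / c)).sub tendsto_cos_div_atTop |>.sub
    (intervalIntegral_tendsto_integral_Ioi c
      (integrableOn_Ioi_div_sq_of_abs_le_one continuous_cos abs_cos_le_one hc) tendsto_id)
  rw [sub_zero] at this
  exact this.congr' ((eventually_ge_atTop c).mono fun B hB =>
    (integral_sin_div_eq_sub_integral_cos_div_sq hc hB).symm)

lemma integral_sin_mul_div_two_pi_mul_add_neg {t : ℝ} (ht : t ≠ 0) (a b : ℝ) :
    (∫ u in a..b, sin (t * u) / (2 * π * u)) + ∫ u in (-b)..(-a), sin (t * u) / (2 * π * u) =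
      π⁻¹ * ∫ v in t * a..t * b, sin v / v := by
  have heven : ∫ u in (-b)..(-a), sin (t * u) / (2 * π * u) =
      ∫ u in a..b, sin (t * u) / (2 * π * u) := by
    rw [← integral_comp_neg]
    simp only [mul_neg, sin_neg, neg_div_neg_eq]
  have hscale : ∫ u in a..b, sin (t * u) / (2 * π * u) =
      (2 * π)⁻¹ * (t * ∫ u in a..b, sin (t * u) / (t * u)) := by
    rw [← intervalIntegral.integral_const_mul, ← intervalIntegral.integral_const_mul]
    congr 1 with u
    rw [mul_div_assoc', mul_div_mul_left _ _ ht, inv_mul_eq_div, div_div, mul_comm u]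
  rw [heven, hscale, ← smul_eq_mul t, smul_integral_comp_mul_left (fun v => sin v / v) t]
  ring

theorem stmt6_general (t a : ℝ) (ht : 0 < t) (ha : 0 < a)
    (r : ℕ) (hta : t * a = (2 * (r : ℝ) - 1) * Real.pi) :
    ∃ I : ℝ,
      Tendsto (fun b : ℝ =>
          (∫ u in a..b, Real.sin (t * u) / (2 * Real.pi * u)) +
          ∫ u in (-b)..(-a), Real.sin (t * u) / (2 * Real.pi * u))
        atTop (nhds I) ∧
      -(2 / (Real.pi * t * a)) < I ∧ I < 0 := by
  have hc : 0 < t * a := mul_pos ht ha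
  have hcos : cos (t * a) = -1 := by
    rw [hta, show (2 * (r : ℝ) - 1) * π = r * (2 * π) - π by ring, cos_nat_mul_two_pi_sub_pi]
  set J := ∫ v in Ioi (t * a), cos v / v ^ 2
  obtain ⟨hJ_low, hJ_up⟩ := abs_lt.1 (abs_integral_Ioi_cos_div_sq_lt hc)
  refine ⟨π⁻¹ * (cos (t * a) / (t * a) - J), ?_, ?_, ?_⟩
  · simp_rw [integral_sin_mul_div_two_pi_mul_add_neg ht.ne']
    exact ((tendsto_integral_sin_div hc).comp (tendsto_id.const_mul_atTop ht)).const_mul _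
  · rw [hcos, show -(2 / (π * t * a)) = π⁻¹ * -(2 * (t * a)⁻¹) by field_simp]
    refine mul_lt_mul_of_pos_left ?_ (inv_pos.2 pi_pos)
    rw [neg_div, ← inv_eq_one_div]
    linarith
  · rw [hcos, neg_div, ← inv_eq_one_div]
    exact mul_neg_of_pos_of_neg (inv_pos.2 pi_pos) (by linarith)

/-- For `t > 0` and `a > 0` with `t·a = (2r−1)π` for some `r ≥ 1`, the tail integral
`(∫_{-∞}^{-a} + ∫_{a}^{∞}) sin(tu)/(2πu) du` (taken as a symmetric limit) lies
strictly between `−2/(πta)` and `0`. -/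
theorem stmt6 (t a : ℝ) (ht : 0 < t) (ha : 0 < a)
    (r : ℕ) (hr : 1 ≤ r) (hta : t * a = (2 * (r : ℝ) - 1) * Real.pi) :
    ∃ I : ℝ,
      Tendsto (fun b : ℝ =>
          (∫ u in a..b, Real.sin (t * u) / (2 * Real.pi * u)) +
          ∫ u in (-b)..(-a), Real.sin (t * u) / (2 * Real.pi * u))
        atTop (nhds I) ∧
      -(2 / (Real.pi * t * a)) < I ∧ I < 0 :=
  stmt6_general t a ht ha r hta
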